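/- arXiv:2306.15235 — 3 statements merged into one kernel-verified Lean document; each statement's English description precedes it below -/
import Mathlib

section
/- For every a > 0 and every λ > 0, ∫_0^∞ e^{−λt} m_a(t) dt = 2(√(λ + a²) − a)/λ. -/
/-!
Since `e^{-λt} f_{1/2}^c(t) = f_{1/2}^{λ+c}(t)` and `f_{1/2}^c` integrates to `c^{-1/2}` (a
`Γ(1/2)` integral), the Laplace transform of `f_{1/2}^c` at `λ` is `(λ + c)^{-1/2}`. Integrating
by parts, the Laplace transform of a primitive `∫_0^t f` is `λ⁻¹` times that of `f`, and the
constant `a` contributes `a/λ`. With `c = a²` this gives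
`2 ((λ + a²)/(λ √(λ + a²)) - a/λ) = 2 (√(λ + a²) - a)/λ`.
-/

open MeasureTheory

/-- `f_β^α` with `β = 1/2`: `f_{1/2}^α(t) = e^{-αt} t^{-1/2} / √π`. -/
noncomputable def fHalf (α t : ℝ) : ℝ :=
  Real.exp (-α * t) * t ^ (-(1 : ℝ) / 2) / Real.sqrt Real.pi

/-- The kernel `m_a(t) = 2 ( f_{1/2}^{a²}(t) + a² ∫_0^t f_{1/2}^{a²}(s) ds − a )`. -/
noncomputable def mKer (a t : ℝ) : ℝ :=
  2 * (fHalf (a ^ 2) t + a ^ 2 * (∫ s in (0 : ℝ)..t, fHalf (a ^ 2) s) - a)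

open Set Real Filter Topology

section Primitive

variable {f : ℝ → ℝ}

theorem continuousOn_primitive_Ici (hf : IntegrableOn f (Ioi 0)) :
    ContinuousOn (fun t ↦ ∫ s in (0 : ℝ)..t, f s) (Ici 0) := by
  intro t ht
  have hI : IntervalIntegrable f volume 0 (t + 1) :=
    (intervalIntegrable_iff_integrableOn_Ioc_of_le (by linarith [mem_Ici.1 ht])).2
      (hf.mono_set Ioc_subset_Ioi_self)
  have hIcc : uIcc 0 (t + 1) ∈ 𝓝[Ici 0] t := by
    rw [uIcc_of_le (by linarith [mem_Ici.1 ht]), ← Ici_inter_Iic]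
    exact inter_mem_nhdsWithin _ (Iic_mem_nhds (by linarith))
  exact (intervalIntegral.continuousOn_primitive_interval' hI left_mem_uIcc t
    (mem_of_mem_nhdsWithin ht hIcc)).mono_of_mem_nhdsWithin hIcc

theorem norm_primitive_le_integral_Ioi (hf : IntegrableOn f (Ioi 0)) {t : ℝ} (ht : 0 ≤ t) :
    ‖∫ s in (0 : ℝ)..t, f s‖ ≤ ∫ s in Ioi 0, ‖f s‖ := by
  rw [intervalIntegral.integral_of_le ht]
  exact (norm_integral_le_integral_norm _).trans <|
    setIntegral_mono_set hf.norm (.of_forall fun _ ↦ norm_nonneg _) (.of_forall Ioc_subset_Ioi_self)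

theorem integrableOn_exp_neg_mul_mul_primitive (hf : IntegrableOn f (Ioi 0)) {l : ℝ}
    (hl : 0 < l) :
    IntegrableOn (fun t ↦ exp (-l * t) * ∫ s in (0 : ℝ)..t, f s) (Ioi 0) :=
  (exp_neg_integrableOn_Ioi 0 hl).mul_bdd
    ((continuousOn_primitive_Ici hf).mono Ioi_subset_Ici_self
      |>.aestronglyMeasurable measurableSet_Ioi)
    (c := ∫ s in Ioi 0, ‖f s‖) <| by
    filter_upwards [self_mem_ae_restrict measurableSet_Ioi] with t ht
    exact norm_primitive_le_integral_Ioi hf (le_of_lt ht)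

theorem integral_exp_neg_mul_mul_primitive (hf : IntegrableOn f (Ioi 0))
    (hfc : ContinuousOn f (Ioi 0)) {l : ℝ} (hl : 0 < l) :
    ∫ t in Ioi 0, exp (-l * t) * ∫ s in (0 : ℝ)..t, f s =
      l⁻¹ * ∫ t in Ioi 0, exp (-l * t) * f t := by
  let F : ℝ → ℝ := fun t ↦ ∫ s in (0 : ℝ)..t, f s
  let v : ℝ → ℝ := fun t ↦ -l⁻¹ * exp (-l * t)
  have hv : ∀ t ∈ Ioi (0 : ℝ), HasDerivAt v (exp (-l * t)) t := fun t _ ↦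
    (((hasDerivAt_id' t).const_mul (-l)).exp.const_mul (-l⁻¹)).congr_deriv (by field_simp)
  have hF : ∀ t ∈ Ioi (0 : ℝ), HasDerivAt F (f t) t := fun t ht ↦
    intervalIntegral.integral_hasDerivAt_right
      ((intervalIntegrable_iff_integrableOn_Ioc_of_le (le_of_lt ht)).2
        (hf.mono_set Ioc_subset_Ioi_self))
      (hfc.stronglyMeasurableAtFilter isOpen_Ioi t ht) (hfc.continuousAt (Ioi_mem_nhds ht))
  have hFv' : IntegrableOn (fun t ↦ F t * exp (-l * t)) (Ioi 0) := by
    simpa only [mul_comm] using integrableOn_exp_neg_mul_mul_primitive hf hl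
  have hef : IntegrableOn (fun t ↦ exp (-l * t) * f t) (Ioi 0) := by
    refine hf.bdd_mul (c := 1) (by fun_prop) ?_
    filter_upwards [self_mem_ae_restrict measurableSet_Ioi] with t ht
    rw [norm_of_nonneg (exp_nonneg _), exp_le_one_iff]
    exact mul_nonpos_of_nonpos_of_nonneg (neg_nonpos.2 hl.le) (le_of_lt ht)
  have hfv : IntegrableOn (fun t ↦ f t * v t) (Ioi 0) :=
    (hef.const_mul (-l⁻¹)).congr (.of_forall fun t ↦ by simp only [v]; ring)
  have h_zero : Tendsto (fun t ↦ F t * v t) (𝓝[>] 0) (𝓝 0) := by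
    have hF0 : Tendsto F (𝓝[>] 0) (𝓝 0) := by
      simpa [F] using ((continuousOn_primitive_Ici hf) 0 self_mem_Ici).mono_left
        (nhdsWithin_mono _ Ioi_subset_Ici_self)
    simpa using hF0.mul ((by fun_prop : Continuous v).continuousWithinAt (x := 0) (s := Ioi 0))
  have h_infty : Tendsto (fun t ↦ F t * v t) atTop (𝓝 0) := by
    have hv0 : Tendsto v atTop (𝓝 0) := by
      simpa [v] using (tendsto_exp_atBot.comp
        (tendsto_id.const_mul_atTop_of_neg (neg_lt_zero.2 hl))).const_mul (-l⁻¹)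
    simpa using (intervalIntegral_tendsto_integral_Ioi 0 hf tendsto_id).mul hv0
  simp_rw [mul_comm (exp _)]
  rw [integral_Ioi_mul_deriv_eq_deriv_mul hF hv hFv' hfv h_zero h_infty]
  simp_rw [v, mul_left_comm (f _), integral_const_mul]
  ring

end Primitive

section FHalf

variable {c : ℝ}

theorem fHalf_integrableOn_Ioi (hc : 0 < c) : IntegrableOn (fHalf c) (Ioi 0) := by
  have h := (integrableOn_rpow_mul_exp_neg_mul_rpow (s := -(1 : ℝ) / 2) (by norm_num)
    one_pos hc).mul_const (√π)⁻¹
  simp_rw [rpow_one] at h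
  exact IntegrableOn.congr_fun h (fun t _ ↦ by rw [fHalf]; ring) measurableSet_Ioi

theorem integral_fHalf_Ioi (hc : 0 < c) : ∫ t in Ioi 0, fHalf c t = (√c)⁻¹ := by
  have hΓ := integral_rpow_mul_exp_neg_mul_Ioi (a := 1 / 2) (by norm_num) hc
  rw [Gamma_one_half_eq, ← sqrt_eq_rpow] at hΓ
  calc ∫ t in Ioi 0, fHalf c t
      = (∫ t in Ioi 0, t ^ ((1 : ℝ) / 2 - 1) * exp (-(c * t))) / √π := by
        rw [← integral_div]
        refine setIntegral_congr_fun measurableSet_Ioi fun t _ ↦ ?_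
        rw [fHalf]; norm_num; ring_nf
    _ = (√c)⁻¹ := by rw [hΓ, mul_div_cancel_right₀ _ (by positivity), one_div, sqrt_inv]

theorem continuousOn_fHalf : ContinuousOn (fHalf c) (Ioi 0) := by
  unfold fHalf
  exact ((by fun_prop : Continuous fun t ↦ exp (-c * t)).continuousOn.mul
    (continuousOn_id.rpow_const fun t ht ↦ Or.inl (ne_of_gt ht))).div_const _

theorem exp_neg_mul_mul_fHalf (l t : ℝ) : exp (-l * t) * fHalf c t = fHalf (l + c) t := by
  rw [fHalf, fHalf, mul_div_assoc', ← mul_assoc, ← exp_add]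
  ring_nf

theorem integral_exp_neg_mul_mul_fHalf {l : ℝ} (hlc : 0 < l + c) :
    ∫ t in Ioi 0, exp (-l * t) * fHalf c t = (√(l + c))⁻¹ := by
  simp_rw [exp_neg_mul_mul_fHalf]
  exact integral_fHalf_Ioi hlc

end FHalf

/-- For `a > 0` and `λ > 0`,
`∫_0^∞ e^{−λt} m_a(t) dt = 2(√(λ + a²) − a)/λ`. -/
theorem stmt1 (a l : ℝ) (ha : 0 < a) (hl : 0 < l) :
    (∫ t in Set.Ioi (0 : ℝ), Real.exp (-l * t) * mKer a t) =
      2 * (Real.sqrt (l + a ^ 2) - a) / l := by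
  have hc : 0 < a ^ 2 := by positivity
  have hlc : 0 < l + a ^ 2 := by positivity
  have hf := fHalf_integrableOn_Ioi hc
  have hexp : IntegrableOn (fun t ↦ exp (-l * t)) (Ioi 0) := exp_neg_integrableOn_Ioi 0 hl
  have hef : IntegrableOn (fun t ↦ exp (-l * t) * fHalf (a ^ 2) t) (Ioi 0) := by
    simpa only [exp_neg_mul_mul_fHalf] using fHalf_integrableOn_Ioi hlc
  have hprim := integrableOn_exp_neg_mul_mul_primitive hf hl
  have hsplit : (fun t ↦ exp (-l * t) * mKer a t) = fun t ↦
      2 * (exp (-l * t) * fHalf (a ^ 2) t)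
        + 2 * a ^ 2 * (exp (-l * t) * ∫ s in (0 : ℝ)..t, fHalf (a ^ 2) s)
        - 2 * a * exp (-l * t) := by
    funext t; rw [mKer]; ring
  have hlaplace_exp : ∫ t in Ioi 0, exp (-l * t) = l⁻¹ := by
    simpa using integral_exp_mul_Ioi (neg_neg_of_pos hl) 0
  rw [hsplit, integral_sub ?_ (hexp.const_mul _), integral_add (hef.const_mul 2) (hprim.const_mul _),
    integral_const_mul, integral_const_mul, integral_const_mul,
    integral_exp_neg_mul_mul_primitive hf continuousOn_fHalf hl, hlaplace_exp,
    integral_exp_neg_mul_mul_fHalf hlc]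
  · have hs : √(l + a ^ 2) ^ 2 = l + a ^ 2 := sq_sqrt hlc.le
    field_simp
    linear_combination -hs
  · exact (hef.const_mul 2).add (hprim.const_mul _)
end

section
/- For every a > 0 and every t > 0: m_a(t)/2 = f_{1/2}^{a²}(t) − a·erfc(a√t) = e^{−a²t} q^a(t); consequently erfc(a√t) = 1 − a ∫_0^t f_{1/2}^{a²}(s) ds, m_a(t) ≤ 2 f_{1/2}^{a²}(t), and q^a(t) > 0 for all t > 0. -/
open MeasureTheory

/-- The complementary error function `erfc(s) = (2/√π) ∫_s^∞ e^{−τ²} dτ`. -/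
noncomputable def erfc (s : ℝ) : ℝ :=
  (2 / Real.sqrt Real.pi) * ∫ τ in Set.Ioi s, Real.exp (-τ ^ 2)

/-- `q^μ(t) = t^{-1/2}/√π − μ e^{μ²t} erfc(μ√t)` (note `f_{1/2}^0(t) = t^{-1/2}/√π`). -/
noncomputable def qFun (μ t : ℝ) : ℝ :=
  t ^ (-(1 : ℝ) / 2) / Real.sqrt Real.pi - μ * Real.exp (μ ^ 2 * t) * erfc (μ * Real.sqrt t)

/-! Substituting `s = (τ / a)²` turns `a ∫₀ᵗ f_{1/2}^{a²}` into `(2/√π) ∫₀^{a√t} e^{-τ²}`, which is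
`1 - erfc(a√t)` because the full half-line Gaussian integral is `√π/2`; both formulas for `m_a/2`
then follow by algebra, using `e^{-a²t} e^{a²t} = 1` for the one with `q^a`. Positivity of `q^a`
is the Mills-ratio bound `erfc s < e^{-s²} / (s√π)` for `s > 0`, which holds because
`e^{-τ²} < (τ/s) e^{-τ²}` on `(s, ∞)` and the right-hand side integrates to `e^{-s²}/(2s)`. -/

open Real Set Filter Topology

lemma rpow_neg_half_eq_inv_sqrt {x : ℝ} (hx : 0 ≤ x) : x ^ (-(1 : ℝ) / 2) = (√x)⁻¹ := by
  rw [neg_div, Real.rpow_neg hx, Real.sqrt_eq_rpow]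

lemma integrableOn_exp_neg_sq (s : ℝ) : IntegrableOn (fun τ : ℝ => exp (-τ ^ 2)) (Ioi s) := by
  simpa using (integrable_exp_neg_mul_sq one_pos).integrableOn (s := Ioi s)

lemma erfc_eq_one_sub (s : ℝ) : erfc s = 1 - 2 / √π * ∫ τ in (0 : ℝ)..s, exp (-τ ^ 2) := by
  have hhalf : ∫ τ in Ioi (0 : ℝ), exp (-τ ^ 2) = √π / 2 := by
    simpa using integral_gaussian_Ioi 1
  have hsplit := intervalIntegral.integral_interval_add_Ioi
    (integrableOn_exp_neg_sq 0) (integrableOn_exp_neg_sq s)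
  have htail : ∫ τ in Ioi s, exp (-τ ^ 2) = √π / 2 - ∫ τ in (0 : ℝ)..s, exp (-τ ^ 2) := by
    linarith
  rw [erfc, htail]
  field_simp

lemma erfc_nonneg (s : ℝ) : 0 ≤ erfc s :=
  mul_nonneg (by positivity) (setIntegral_nonneg measurableSet_Ioi fun τ _ => (exp_pos _).le)

lemma intervalIntegrable_fHalf (α a b : ℝ) : IntervalIntegrable (fHalf α) volume a b := by
  have hrpow : IntervalIntegrable (fun x : ℝ => x ^ (-(1 : ℝ) / 2)) volume a b :=
    intervalIntegral.intervalIntegrable_rpow' (by norm_num)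
  have hexp : ContinuousOn (fun x : ℝ => exp (-α * x) / √π) (uIcc a b) := by fun_prop
  refine (hrpow.continuousOn_mul hexp).congr fun x _ => ?_
  simp only [fHalf]
  ring

lemma fHalf_eq_of_nonneg (α : ℝ) {x : ℝ} (hx : 0 ≤ x) :
    fHalf α x = (2 * √x)⁻¹ * (2 / √π * exp (-α * √x ^ 2)) := by
  rw [fHalf, rpow_neg_half_eq_inv_sqrt hx, sq_sqrt hx]
  ring

lemma integral_fHalf (α : ℝ) {t : ℝ} (ht : 0 ≤ t) :
    ∫ s in (0 : ℝ)..t, fHalf α s = 2 / √π * ∫ u in (0 : ℝ)..√t, exp (-α * u ^ 2) := by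
  set g : ℝ → ℝ := fun u => 2 / √π * exp (-α * u ^ 2)
  have hg : Continuous g := by fun_prop
  have hsqrt : ContinuousOn Real.sqrt (uIcc 0 t) := Real.continuous_sqrt.continuousOn
  have hderiv : ∀ x ∈ Ioo (min 0 t) (max 0 t),
      HasDerivWithinAt Real.sqrt (2 * √x)⁻¹ (Ioi x) x := by
    intro x hx
    rw [min_eq_left ht, max_eq_right ht] at hx
    simpa using (Real.hasDerivAt_sqrt hx.1.ne').hasDerivWithinAt
  have hEq : EqOn (fun x => (2 * √x)⁻¹ • (g ∘ Real.sqrt) x) (fHalf α) (uIcc 0 t) := by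
    intro x hx
    rw [uIcc_of_le ht] at hx
    exact (fHalf_eq_of_nonneg α hx.1).symm
  have hsubst := intervalIntegral.integral_deriv_smul_comp''' hsqrt hderiv hg.continuousOn
    (hg.continuousOn.integrableOn_compact (isCompact_uIcc.image_of_continuousOn hsqrt))
    (((intervalIntegrable_iff').mp (intervalIntegrable_fHalf α 0 t)).congr_fun hEq.symm
      measurableSet_uIcc)
  rw [intervalIntegral.integral_congr hEq, Real.sqrt_zero] at hsubst
  rw [hsubst, intervalIntegral.integral_const_mul]

lemma erfc_mul_sqrt_eq {a t : ℝ} (ha : a ≠ 0) (ht : 0 ≤ t) :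
    erfc (a * √t) = 1 - a * ∫ s in (0 : ℝ)..t, fHalf (a ^ 2) s := by
  have hscale :=
    intervalIntegral.integral_comp_mul_left (fun τ => exp (-τ ^ 2)) ha (a := 0) (b := √t)
  simp only [mul_pow, mul_zero, smul_eq_mul, ← neg_mul] at hscale
  rw [integral_fHalf _ ht, hscale, erfc_eq_one_sub]
  field_simp

lemma integral_Ioi_mul_exp_neg_sq (s : ℝ) :
    ∫ τ in Ioi s, τ * exp (-τ ^ 2) = exp (-s ^ 2) / 2 := by
  have hderiv : ∀ x ∈ Ioi s, HasDerivAt (fun τ => -(exp (-τ ^ 2) / 2)) (x * exp (-x ^ 2)) x := by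
    intro x _
    refine (((hasDerivAt_pow 2 x).fun_neg.exp).div_const 2).fun_neg.congr_deriv ?_
    norm_num
    ring
  have hlim : Tendsto (fun τ : ℝ => -(exp (-τ ^ 2) / 2)) atTop (𝓝 0) := by
    have := ((tendsto_exp_atBot.comp
      (tendsto_neg_atTop_atBot.comp (tendsto_pow_atTop two_ne_zero))).div_const 2).neg
    simpa using this
  rw [integral_Ioi_of_hasDerivAt_of_tendsto (by fun_prop) hderiv
    (by simpa using (integrable_mul_exp_neg_mul_sq one_pos).integrableOn) hlim, zero_sub, neg_neg]

lemma erfc_lt_exp_neg_sq_div {s : ℝ} (hs : 0 < s) : erfc s < exp (-s ^ 2) / (s * √π) := by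
  have hint₁ : IntegrableOn (fun τ => τ * exp (-τ ^ 2)) (Ioi s) := by
    simpa using (integrable_mul_exp_neg_mul_sq one_pos).integrableOn
  have hint₂ : IntegrableOn (fun τ => s * exp (-τ ^ 2)) (Ioi s) :=
    (integrableOn_exp_neg_sq s).const_mul s
  have hposOn : ∀ τ ∈ Ioi s, 0 < (τ - s) * exp (-τ ^ 2) := fun τ hτ =>
    mul_pos (sub_pos.2 hτ) (exp_pos _)
  have hpos : 0 < ∫ τ in Ioi s, (τ - s) * exp (-τ ^ 2) := by
    have hsupp : Function.support (fun τ => (τ - s) * exp (-τ ^ 2)) ∩ Ioi s = Ioi s :=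
      inter_eq_right.2 fun τ hτ => (hposOn τ hτ).ne'
    rw [setIntegral_pos_iff_support_of_nonneg_ae
      ((ae_restrict_iff' measurableSet_Ioi).2 (Eventually.of_forall fun τ hτ => (hposOn τ hτ).le))
      (by simp_rw [sub_mul]; exact hint₁.sub hint₂), hsupp, volume_Ioi]
    exact ENNReal.zero_lt_top
  have hsplit : ∫ τ in Ioi s, (τ - s) * exp (-τ ^ 2) =
      exp (-s ^ 2) / 2 - s * ∫ τ in Ioi s, exp (-τ ^ 2) := by
    simp_rw [sub_mul]
    rw [integral_sub hint₁ hint₂, integral_const_mul, integral_Ioi_mul_exp_neg_sq]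
  have hbound : ∫ τ in Ioi s, exp (-τ ^ 2) < exp (-s ^ 2) / (2 * s) := by
    rw [lt_div_iff₀ (by positivity)]
    linarith
  calc erfc s < 2 / √π * (exp (-s ^ 2) / (2 * s)) := by
        rw [erfc]; gcongr
    _ = exp (-s ^ 2) / (s * √π) := by field_simp

lemma mul_erfc_mul_sqrt_lt_fHalf {a t : ℝ} (ha : 0 < a) (ht : 0 < t) :
    a * erfc (a * √t) < fHalf (a ^ 2) t := by
  have hst : 0 < √t := sqrt_pos.2 ht
  calc a * erfc (a * √t) < a * (exp (-(a * √t) ^ 2) / (a * √t * √π)) :=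
        mul_lt_mul_of_pos_left (erfc_lt_exp_neg_sq_div (mul_pos ha hst)) ha
    _ = fHalf (a ^ 2) t := by
        rw [fHalf, rpow_neg_half_eq_inv_sqrt ht.le, mul_pow, sq_sqrt ht.le, neg_mul]
        field_simp

lemma exp_neg_mul_qFun (μ t : ℝ) :
    exp (-μ ^ 2 * t) * qFun μ t = fHalf (μ ^ 2) t - μ * erfc (μ * √t) := by
  have hinv : exp (-μ ^ 2 * t) * exp (μ ^ 2 * t) = 1 := by
    rw [← exp_add, neg_mul, neg_add_cancel, exp_zero]
  rw [qFun, fHalf]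
  linear_combination (-μ * erfc (μ * √t)) * hinv

/-- For `a > 0`, `t > 0`:
`m_a(t)/2 = f_{1/2}^{a²}(t) − a·erfc(a√t) = e^{−a²t} q^a(t)`, hence
`erfc(a√t) = 1 − a ∫_0^t f_{1/2}^{a²}`, `m_a(t) ≤ 2 f_{1/2}^{a²}(t)`, and `q^a(t) > 0`. -/
theorem stmt5 (a : ℝ) (ha : 0 < a) : ∀ t > (0 : ℝ),
    mKer a t / 2 = fHalf (a ^ 2) t - a * erfc (a * Real.sqrt t) ∧
    mKer a t / 2 = Real.exp (-a ^ 2 * t) * qFun a t ∧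
    erfc (a * Real.sqrt t) = 1 - a * ∫ s in (0 : ℝ)..t, fHalf (a ^ 2) s ∧
    mKer a t ≤ 2 * fHalf (a ^ 2) t ∧
    0 < qFun a t := by
  intro t ht
  have herfc := erfc_mul_sqrt_eq ha.ne' ht.le
  have hhalf : mKer a t / 2 = fHalf (a ^ 2) t - a * erfc (a * √t) := by
    rw [mKer, herfc]
    ring
  have hq := exp_neg_mul_qFun a t
  have hlt := mul_erfc_mul_sqrt_lt_fHalf ha ht
  refine ⟨hhalf, hhalf.trans hq.symm, herfc, ?_, ?_⟩
  · linarith [mul_nonneg ha.le (erfc_nonneg (a * √t))]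
  · exact pos_of_mul_pos_right (a := exp (-a ^ 2 * t)) (by linarith) (exp_pos _).le
end

section
/- Let a ≥ 0, b > 0, λ > 0, c ∈ ℝ. Suppose W : ℝ → ℝ is bounded and continuous, twice continuously differentiable on ℝ ∖ {0}, satisfies −W''(x) + (λ + a²)W(x) = −c e^{−a|x|} for all x ≠ 0, its one-sided derivatives W'(0⁺) and W'(0⁻) exist, and W'(0⁺) − W'(0⁻) = 2b(W(0) + 1/λ). Then W(0) = (ca + bc − b)/(λ(√(λ + a²) + b)) − c/λ. -/
/-!
Put `μ = √(λ + a²)`. On each half-line `V = W + (c/λ) e^{-a|x|}` solves `V'' = μ² V`, and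
for `ν = ±μ` the quantity `(V' - ν V) e^{ν x}` has derivative `(V'' - ν² V) e^{ν x} = 0`.
Subtracting the two resulting first integrals gives `2μ V = B e^{μ x} - A e^{-μ x}`; boundedness
kills `B`, so `V(x) = V(0) e^{-μ|x|}` up to the boundary, and both one-sided derivatives of `W`
at `0` are `∓(μ (W(0) + c/λ) - ca/λ)`. The jump condition is then a linear equation for `W(0)`.
-/

open Set Filter Real

lemma hasDerivAt_exp_mul (ν x : ℝ) : HasDerivAt (fun y => exp (ν * y)) (ν * exp (ν * x)) x := by
  simpa [mul_comm] using ((hasDerivAt_id x).const_mul ν).exp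

lemma eq_zero_of_abs_mul_exp_le {B μ M : ℝ} (hμ : 0 < μ)
    (h : ∀ x ∈ Ioi (0 : ℝ), |B * exp (μ * x)| ≤ M) : B = 0 := by
  by_contra hB
  have hgrow : Tendsto (fun x => |B| * exp (μ * x)) atTop atTop :=
    (tendsto_exp_atTop.comp (tendsto_id.const_mul_atTop hμ)).const_mul_atTop (abs_pos.mpr hB)
  obtain ⟨x, hxM, hx⟩ := ((hgrow.eventually_gt_atTop M).and (eventually_gt_atTop 0)).exists
  have := h x hx
  rw [abs_mul, abs_of_pos (exp_pos _)] at this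
  linarith

section HalfLine

variable {f f' f'' : ℝ → ℝ}

lemma exists_sub_mul_eq_mul_exp {ν : ℝ}
    (hf : ∀ x ∈ Ioi (0 : ℝ), HasDerivAt f (f' x) x)
    (hf' : ∀ x ∈ Ioi (0 : ℝ), HasDerivAt f' (f'' x) x)
    (hode : ∀ x ∈ Ioi (0 : ℝ), f'' x = ν ^ 2 * f x) :
    ∃ K, ∀ x ∈ Ioi (0 : ℝ), f' x - ν * f x = K * exp (-ν * x) := by
  set g := fun y => (f' y - ν * f y) * exp (ν * y)
  have hg : ∀ x ∈ Ioi (0 : ℝ), HasDerivAt g 0 x := fun x hx => by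
    refine (((hf' x hx).sub ((hf x hx).const_mul ν)).mul (hasDerivAt_exp_mul ν x)).congr_deriv ?_
    simp only [Pi.sub_apply, hode x hx]; ring
  obtain ⟨K, hK⟩ := isOpen_Ioi.exists_is_const_of_deriv_eq_zero isPreconnected_Ioi
    (fun x hx => (hg x hx).differentiableAt.differentiableWithinAt) (fun x hx => (hg x hx).deriv)
  refine ⟨K, fun x hx => ?_⟩
  rw [← hK x hx, mul_assoc, ← exp_add]
  simp

variable {μ : ℝ}

lemma eqOn_mul_exp_neg_of_bounded (hμ : 0 < μ) (hcont : ContinuousOn f (Ici 0))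
    (hbdd : ∃ M, ∀ x ∈ Ioi (0 : ℝ), |f x| ≤ M)
    (hf : ∀ x ∈ Ioi (0 : ℝ), HasDerivAt f (f' x) x)
    (hf' : ∀ x ∈ Ioi (0 : ℝ), HasDerivAt f' (f'' x) x)
    (hode : ∀ x ∈ Ioi (0 : ℝ), f'' x = μ ^ 2 * f x) :
    EqOn f (fun x => f 0 * exp (-μ * x)) (Ici 0) := by
  obtain ⟨M, hM⟩ := hbdd
  obtain ⟨A, hA⟩ := exists_sub_mul_eq_mul_exp hf hf' hode
  obtain ⟨B, hB⟩ := exists_sub_mul_eq_mul_exp (ν := -μ) hf hf' (by simpa only [neg_sq] using hode)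
  have hsol : ∀ x ∈ Ioi (0 : ℝ), 2 * μ * f x = B * exp (μ * x) - A * exp (-μ * x) := fun x hx => by
    linear_combination (hB x hx) - (hA x hx) + B * (by ring_nf : exp (- -μ * x) = exp (μ * x))
  have hB0 : B = 0 := eq_zero_of_abs_mul_exp_le hμ (M := 2 * μ * M + |A|) fun x hx => by
    have hx' : 0 ≤ x := le_of_lt hx
    have hdecay : exp (-μ * x) ≤ 1 := exp_le_one_iff.mpr (by nlinarith)
    calc |B * exp (μ * x)| = |2 * μ * f x + A * exp (-μ * x)| := by rw [hsol x hx]; ring_nf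
      _ ≤ |2 * μ * f x| + |A * exp (-μ * x)| := abs_add_le _ _
      _ = 2 * μ * |f x| + |A| * exp (-μ * x) := by
          rw [abs_mul (2 * μ), abs_mul A, abs_of_pos (by positivity : 0 < 2 * μ),
            abs_of_pos (exp_pos _)]
      _ ≤ 2 * μ * M + |A| := by
          gcongr
          · exact hM x hx
          · exact mul_le_of_le_one_right (abs_nonneg A) hdecay
  set C := -A / (2 * μ)
  have hIoi : EqOn f (fun x => C * exp (-μ * x)) (Ioi 0) := fun x hx => by
    have := hsol x hx
    rw [hB0] at this
    show f x = -A / (2 * μ) * exp (-μ * x)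
    rw [div_mul_eq_mul_div, eq_div_iff (by positivity)]
    linarith
  have hIci := hIoi.of_subset_closure hcont (by fun_prop) Ioi_subset_Ici_self (by rw [closure_Ioi])
  have hC : C = f 0 := by simpa using (hIci self_mem_Ici).symm
  rwa [hC] at hIci

end HalfLine

lemma HasDerivWithinAt.comp_neg {f : ℝ → ℝ} {d x : ℝ} {s : Set ℝ}
    (h : HasDerivWithinAt f d s (-x)) : HasDerivWithinAt (fun y => f (-y)) (-d) (-s) x := by
  have := h.comp x (hasDerivAt_neg x).hasDerivWithinAt fun y hy => Set.mem_neg.mp hy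
  rwa [mul_neg_one] at this

lemma hasDerivWithinAt_Ici_zero_of_ode {a c l μ : ℝ} {W W' W'' : ℝ → ℝ} (ha : 0 ≤ a) (hl : l ≠ 0)
    (hμ : 0 < μ) (hμ2 : μ ^ 2 = l + a ^ 2) (hbdd : ∃ M, ∀ x, |W x| ≤ M) (hcont : Continuous W)
    (hW' : ∀ x ∈ Ioi (0 : ℝ), HasDerivAt W (W' x) x)
    (hW'' : ∀ x ∈ Ioi (0 : ℝ), HasDerivAt W' (W'' x) x)
    (hode : ∀ x ∈ Ioi (0 : ℝ), -W'' x + (l + a ^ 2) * W x = -c * exp (-a * x)) :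
    HasDerivWithinAt W (-μ * (W 0 + c / l) + c * a / l) (Ici 0) 0 := by
  set V := fun x => W x + c / l * exp (-a * x)
  obtain ⟨M, hM⟩ := hbdd
  have hVbdd : ∀ x ∈ Ioi (0 : ℝ), |V x| ≤ M + |c / l| := fun x hx => by
    have hdecay : exp (-a * x) ≤ 1 := exp_le_one_iff.mpr (by nlinarith [mem_Ioi.mp hx])
    calc |V x| ≤ |W x| + |c / l| * exp (-a * x) := by
          simpa only [abs_mul, abs_of_pos (exp_pos _)] using abs_add_le (W x) (c / l * exp (-a * x))
      _ ≤ M + |c / l| := by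
          gcongr
          · exact hM x
          · exact mul_le_of_le_one_right (abs_nonneg _) hdecay
  have hV := eqOn_mul_exp_neg_of_bounded hμ (by fun_prop) ⟨_, hVbdd⟩
    (f' := fun x => W' x - c * a / l * exp (-a * x))
    (f'' := fun x => W'' x + c * a ^ 2 / l * exp (-a * x))
    (fun x hx => ((hW' x hx).add ((hasDerivAt_exp_mul (-a) x).const_mul (c / l))).congr_deriv
      (by ring))
    (fun x hx => ((hW'' x hx).sub ((hasDerivAt_exp_mul (-a) x).const_mul (c * a / l))).congr_deriv
      (by ring))
    (fun x hx => by
      simp only [V, hμ2]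
      linear_combination -hode x hx - c * exp (-a * x) * div_self hl)
  have hV0 : V 0 = W 0 + c / l := by simp [V]
  have hderiv : HasDerivAt (fun x => V 0 * exp (-μ * x) - c / l * exp (-a * x))
      (-μ * (W 0 + c / l) + c * a / l) 0 := by
    refine (((hasDerivAt_exp_mul (-μ) 0).const_mul (V 0)).sub
      ((hasDerivAt_exp_mul (-a) 0).const_mul (c / l))).congr_deriv ?_
    simp only [hV0, mul_zero, exp_zero]
    ring
  refine hderiv.hasDerivWithinAt.congr_of_mem (fun x hx => ?_) self_mem_Ici
  have := hV hx
  simp only [V] at this ⊢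
  linarith

lemma hasDerivWithinAt_Iic_zero_of_ode {a c l μ : ℝ} {W W' W'' : ℝ → ℝ} (ha : 0 ≤ a) (hl : l ≠ 0)
    (hμ : 0 < μ) (hμ2 : μ ^ 2 = l + a ^ 2) (hbdd : ∃ M, ∀ x, |W x| ≤ M) (hcont : Continuous W)
    (hW' : ∀ x ∈ Iio (0 : ℝ), HasDerivAt W (W' x) x)
    (hW'' : ∀ x ∈ Iio (0 : ℝ), HasDerivAt W' (W'' x) x)
    (hode : ∀ x ∈ Iio (0 : ℝ), -W'' x + (l + a ^ 2) * W x = -c * exp (a * x)) :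
    HasDerivWithinAt W (μ * (W 0 + c / l) - c * a / l) (Iic 0) 0 := by
  have hneg : ∀ x ∈ Ioi (0 : ℝ), -x ∈ Iio 0 := fun _ hx => mem_Iio.mpr (neg_lt_zero.mpr hx)
  have hrefl := hasDerivWithinAt_Ici_zero_of_ode (W := fun x => W (-x)) (W' := fun x => -W' (-x))
    (W'' := fun x => W'' (-x)) ha hl hμ hμ2 (hbdd.imp fun _ hM x => hM (-x))
    (hcont.comp continuous_neg)
    (fun x hx => ((hW' (-x) (hneg x hx)).comp x (hasDerivAt_neg x)).congr_deriv
      (mul_neg_one _))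
    (fun x hx => ((hW'' (-x) (hneg x hx)).comp x (hasDerivAt_neg x)).neg.congr_deriv
      (by ring))
    (fun x hx => by simpa only [mul_neg, neg_mul] using hode (-x) (hneg x hx))
  have := (show HasDerivWithinAt (fun x => W (-x)) _ (Ici 0) (-0) by rwa [neg_zero]).comp_neg
  simp only [neg_neg, neg_Ici, neg_zero] at this
  exact this.congr_deriv (by ring)

theorem stmt19_general (a b l c : ℝ) (ha : 0 ≤ a) (hb : 0 < b) (hl : 0 < l)
    (W W' W'' : ℝ → ℝ)
    (hWbdd : ∃ M, ∀ x : ℝ, |W x| ≤ M)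
    (hWcont : Continuous W)
    (hW' : ∀ x : ℝ, x ≠ 0 → HasDerivAt W (W' x) x)
    (hW'' : ∀ x : ℝ, x ≠ 0 → HasDerivAt W' (W'' x) x)
    (hode : ∀ x : ℝ, x ≠ 0 →
      -W'' x + (l + a ^ 2) * W x = -c * Real.exp (-a * |x|))
    (hjump : ∃ dp dm : ℝ, HasDerivWithinAt W dp (Set.Ici 0) 0 ∧
      HasDerivWithinAt W dm (Set.Iic 0) 0 ∧ dp - dm = 2 * b * (W 0 + 1 / l)) :
    W 0 = (c * a + b * c - b) / (l * (Real.sqrt (l + a ^ 2) + b)) - c / l := by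
  obtain ⟨dp, dm, hdp, hdm, hjump⟩ := hjump
  set μ := √(l + a ^ 2)
  have hμ : 0 < μ := by positivity
  have hμ2 : μ ^ 2 = l + a ^ 2 := sq_sqrt (by positivity)
  have hright := hasDerivWithinAt_Ici_zero_of_ode (c := c) ha hl.ne' hμ hμ2 hWbdd hWcont
    (fun x hx => hW' x hx.ne') (fun x hx => hW'' x hx.ne')
    (fun x hx => by simpa only [abs_of_pos (mem_Ioi.mp hx)] using hode x hx.ne')
  have hleft := hasDerivWithinAt_Iic_zero_of_ode (c := c) ha hl.ne' hμ hμ2 hWbdd hWcont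
    (fun x hx => hW' x hx.ne) (fun x hx => hW'' x hx.ne)
    (fun x hx => by simpa only [abs_of_neg (mem_Iio.mp hx), neg_mul_neg] using hode x hx.ne)
  have hdp_eq := (uniqueDiffWithinAt_Ici 0).eq_deriv _ hdp hright
  have hdm_eq := (uniqueDiffWithinAt_Iic 0).eq_deriv _ hdm hleft
  have key : (μ + b) * (W 0 + c / l) = (c * a + b * c - b) / l := by
    linear_combination (-hjump + hdp_eq - hdm_eq) / 2
  rw [eq_sub_iff_add_eq, eq_div_iff (by positivity), ← div_mul_cancel₀ (c * a + b * c - b) hl.ne',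
    ← key]
  ring

/-- For the Laplace-transformed transmission problem: if `W` is
bounded, continuous, twice continuously differentiable away from `0`, solves
`−W'' + (λ + a²)W = −c e^{−a|x|}` for `x ≠ 0`, and its one-sided derivatives at `0`
jump by `2b(W(0) + 1/λ)`, then
`W(0) = (ca + bc − b)/(λ(√(λ + a²) + b)) − c/λ`. -/
theorem stmt19 (a b l c : ℝ) (ha : 0 ≤ a) (hb : 0 < b) (hl : 0 < l)
    (W W' W'' : ℝ → ℝ)
    (hWbdd : ∃ M, ∀ x : ℝ, |W x| ≤ M)
    (hWcont : Continuous W)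
    (hW' : ∀ x : ℝ, x ≠ 0 → HasDerivAt W (W' x) x)
    (hW'' : ∀ x : ℝ, x ≠ 0 → HasDerivAt W' (W'' x) x)
    (hW''cont : ContinuousOn W'' {x : ℝ | x ≠ 0})
    (hode : ∀ x : ℝ, x ≠ 0 →
      -W'' x + (l + a ^ 2) * W x = -c * Real.exp (-a * |x|))
    (hjump : ∃ dp dm : ℝ, HasDerivWithinAt W dp (Set.Ici 0) 0 ∧
      HasDerivWithinAt W dm (Set.Iic 0) 0 ∧ dp - dm = 2 * b * (W 0 + 1 / l)) :
    W 0 = (c * a + b * c - b) / (l * (Real.sqrt (l + a ^ 2) + b)) - c / l :=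
  stmt19_general a b l c ha hb hl W W' W'' hWbdd hWcont hW' hW'' hode hjump
end
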